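/- arXiv:2505.15762 — 4 statements merged into one kernel-verified Lean document; each statement's English description precedes it below -/
import Mathlib

section
/- Let K ⊂ ℝ^m be compact, B a subspace of C(K) spanned by real-valued functions, B_ℝ = B ∩ C_ℝ(K), and L a bounded linear operator from B to C(K) mapping B_ℝ into C_ℝ(K). Let ‖·‖ be a monotone norm on B (if |g| ≤ |h| pointwise on K then ‖g‖ ≤ ‖h‖). Then sup over nonzero h ∈ B of ‖L(h)‖_{C(K)}/‖h‖ equals the sup over nonzero real-valued g ∈ B_ℝ of ‖L(g)‖_{C(K)}/‖g‖. -/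
/-!
Every `f ∈ B` is `u + I • v` with `u, v` real-valued elements of `B`, so `B` is closed under
pointwise real parts and `L` commutes with them. If `(L f) x₀` has modulus `‖L f‖` and phase `w`,
then `g = Re (conj w • f)` is a real-valued element of `B` with `|g| ≤ |f|` pointwise, hence
`N g ≤ N f`, and `(L g) x₀ = Re (conj w * (L f) x₀) = ‖L f‖`. Thus every ratio over `B` is
dominated by a ratio over its real-valued part (if `L f = 0`, use the phase of a nonzero value
of `f` instead, to keep `g ≠ 0`).
-/

open Complex ComplexConjugate Submodule

theorem Submodule.exists_add_I_smul_of_mem_span {M : Type*} [AddCommGroup M] [Module ℂ M]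
    [Module ℝ M] [IsScalarTower ℝ ℂ M] {S : Set M} {f : M} (hf : f ∈ span ℂ S) :
    ∃ u ∈ span ℝ S, ∃ v ∈ span ℝ S, f = u + I • v := by
  have smul_eq (c : ℂ) (f : M) : c • f = c.re • f + c.im • (I • f) := by
    conv_lhs => rw [← re_add_im c]
    rw [add_smul, mul_smul, ← coe_algebraMap, algebraMap_smul, algebraMap_smul]
  induction hf using span_induction with
  | mem g hg => exact ⟨g, subset_span hg, 0, zero_mem _, by simp⟩
  | zero => exact ⟨0, zero_mem _, 0, zero_mem _, by simp⟩
  | add f g _ _ hf hg =>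
    obtain ⟨u₁, hu₁, v₁, hv₁, rfl⟩ := hf
    obtain ⟨u₂, hu₂, v₂, hv₂, rfl⟩ := hg
    exact ⟨u₁ + u₂, add_mem hu₁ hu₂, v₁ + v₂, add_mem hv₁ hv₂, by module⟩
  | smul c f _ hf =>
    obtain ⟨u, hu, v, hv, rfl⟩ := hf
    refine ⟨c.re • u - c.im • v, sub_mem (smul_mem _ _ hu) (smul_mem _ _ hv),
      c.im • u + c.re • v, add_mem (smul_mem _ _ hu) (smul_mem _ _ hv), ?_⟩
    have hII : I • I • v = -v := by rw [smul_smul, I_mul_I, neg_one_smul]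
    rw [smul_eq, smul_add, smul_add, hII, smul_add, smul_add, smul_comm I c.re, smul_comm I c.im]
    module

namespace Complex

lemma abs_re_conj_mul_le {w : ℂ} (hw : ‖w‖ ≤ 1) (z : ℂ) : |(conj w * z).re| ≤ ‖z‖ :=
  calc |(conj w * z).re| ≤ ‖conj w * z‖ := abs_re_le_norm _
    _ = ‖w‖ * ‖z‖ := by rw [norm_mul, norm_conj]
    _ ≤ ‖z‖ := mul_le_of_le_one_left (norm_nonneg z) hw

lemma norm_div_norm_le_one (z : ℂ) : ‖z / ‖z‖‖ ≤ 1 := by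
  rw [norm_div, norm_real, norm_norm]
  exact div_self_le_one _

lemma re_conj_div_norm_mul_self (z : ℂ) : (conj (z / ‖z‖) * z).re = ‖z‖ := by
  rcases eq_or_ne z 0 with rfl | hz
  · simp
  · rw [map_div₀, conj_ofReal, div_mul_eq_mul_div, conj_mul', ← ofReal_pow, ← ofReal_div,
      ofReal_re, sq, mul_div_assoc, div_self (norm_ne_zero_iff.2 hz), mul_one]

end Complex

namespace ContinuousMap

variable {X : Type*} [TopologicalSpace X]

lemma exists_norm_apply_eq_norm {E : Type*} [NormedAddCommGroup E] [CompactSpace X] [Nonempty X]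
    (f : C(X, E)) : ∃ x, ‖f x‖ = ‖f‖ := by
  obtain ⟨x, -, hx⟩ :=
    isCompact_univ.exists_isMaxOn Set.univ_nonempty f.continuous.norm.continuousOn
  exact ⟨x, le_antisymm (f.norm_coe_le_norm x) ((f.norm_le (norm_nonneg _)).2 fun y ↦ hx trivial)⟩

variable (X) in
def realValued : Submodule ℝ C(X, ℂ) where
  carrier := {f | ∀ x, (f x).im = 0}
  add_mem' hf hg x := by simp [hf x, hg x]
  zero_mem' _ := rfl
  smul_mem' c f hf x := by simp [hf x]

noncomputable def re (f : C(X, ℂ)) : C(X, ℂ) := ⟨fun x ↦ ((f x).re : ℂ), by fun_prop⟩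

@[simp]
lemma re_apply (f : C(X, ℂ)) (x : X) : f.re x = ((f x).re : ℂ) := rfl

lemma re_mem_realValued (f : C(X, ℂ)) : f.re ∈ realValued X := fun _ ↦ ofReal_im _

lemma re_add_I_smul {u v : C(X, ℂ)} (hu : u ∈ realValued X) (hv : v ∈ realValued X) :
    (u + I • v).re = u := by
  ext x
  apply Complex.ext <;> simp [hu x, hv x]

variable {B : Submodule ℂ C(X, ℂ)}

lemma exists_add_I_smul_of_span_realValued (hspan : B = span ℂ (B ∩ realValued X)) {f : C(X, ℂ)}
    (hf : f ∈ B) : ∃ u v : B, (u : C(X, ℂ)) ∈ realValued X ∧ (v : C(X, ℂ)) ∈ realValued X ∧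
      f = u + I • v := by
  rw [hspan] at hf
  obtain ⟨u, hu, v, hv, rfl⟩ := exists_add_I_smul_of_mem_span hf
  have hle : span ℝ ((B : Set C(X, ℂ)) ∩ realValued X) ≤ B.restrictScalars ℝ ⊓ realValued X :=
    span_le.2 fun g hg ↦ hg
  exact ⟨⟨u, (hle hu).1⟩, ⟨v, (hle hv).1⟩, (hle hu).2, (hle hv).2, rfl⟩

lemma re_mem (hspan : B = span ℂ (B ∩ realValued X)) {f : C(X, ℂ)} (hf : f ∈ B) : f.re ∈ B := by
  obtain ⟨u, v, hu, hv, rfl⟩ := exists_add_I_smul_of_span_realValued hspan hf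
  rw [re_add_I_smul hu hv]
  exact u.2

lemma map_re (hspan : B = span ℂ (B ∩ realValued X)) (L : B →ₗ[ℂ] C(X, ℂ))
    (hreal : ∀ f : B, (f : C(X, ℂ)) ∈ realValued X → L f ∈ realValued X) (f : B) :
    L ⟨(f : C(X, ℂ)).re, re_mem hspan f.2⟩ = (L f).re := by
  obtain ⟨u, v, hu, hv, hf⟩ := exists_add_I_smul_of_span_realValued hspan f.2
  have hre : (⟨(f : C(X, ℂ)).re, re_mem hspan f.2⟩ : B) = u :=
    Subtype.ext ((congrArg re hf).trans (re_add_I_smul hu hv))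
  rw [hre, show f = u + I • v from Subtype.ext hf, map_add, map_smul,
    re_add_I_smul (hreal u hu) (hreal v hv)]

theorem exists_realValued_norm_apply_le_and_norm_map_le [CompactSpace X]
    (hspan : B = span ℂ (B ∩ realValued X)) (L : B →ₗ[ℂ] C(X, ℂ))
    (hreal : ∀ f : B, (f : C(X, ℂ)) ∈ realValued X → L f ∈ realValued X)
    {f : B} (hf : (f : C(X, ℂ)) ≠ 0) :
    ∃ g : B, (g : C(X, ℂ)) ≠ 0 ∧ (g : C(X, ℂ)) ∈ realValued X ∧
      (∀ x, ‖(g : C(X, ℂ)) x‖ ≤ ‖(f : C(X, ℂ)) x‖) ∧ ‖L f‖ ≤ ‖L g‖ := by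
  let g (w : ℂ) : B := ⟨(conj w • (f : C(X, ℂ))).re, re_mem hspan (B.smul_mem _ f.2)⟩
  have hg_apply (w : ℂ) (x : X) : (g w : C(X, ℂ)) x = ((conj w * (f : C(X, ℂ)) x).re : ℂ) := rfl
  have hLg_apply (w : ℂ) (x : X) : L (g w) x = ((conj w * L f x).re : ℂ) := by
    have : L (g w) = (L (conj w • f)).re := map_re hspan L hreal (conj w • f)
    rw [this, map_smul]
    rfl
  have hg_le (z : ℂ) (x : X) : ‖(g (z / ‖z‖) : C(X, ℂ)) x‖ ≤ ‖(f : C(X, ℂ)) x‖ := by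
    rw [hg_apply, norm_real, Real.norm_eq_abs]
    exact abs_re_conj_mul_le (norm_div_norm_le_one z) _
  by_cases hLf : L f = 0
  · obtain ⟨x₁, hx₁⟩ : ∃ x, (f : C(X, ℂ)) x ≠ 0 := by
      by_contra! h
      exact hf (ext h)
    refine ⟨g ((f : C(X, ℂ)) x₁ / ‖(f : C(X, ℂ)) x₁‖), fun h ↦ hx₁ ?_, re_mem_realValued _,
      hg_le _, by simp [hLf]⟩
    have := DFunLike.congr_fun h x₁
    rw [hg_apply, re_conj_div_norm_mul_self] at this
    simpa using this
  · have : Nonempty X := by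
      by_contra! hX
      exact hLf (ext fun x ↦ (hX.false x).elim)
    obtain ⟨x₀, hx₀⟩ := exists_norm_apply_eq_norm (L f)
    have hLg : ‖L f‖ ≤ ‖L (g (L f x₀ / ‖L f x₀‖))‖ := by
      calc ‖L f‖ = ‖L (g (L f x₀ / ‖L f x₀‖)) x₀‖ := by
            rw [hLg_apply, re_conj_div_norm_mul_self, norm_real, norm_norm, hx₀]
        _ ≤ _ := norm_coe_le_norm _ x₀
    refine ⟨g (L f x₀ / ‖L f x₀‖), fun h ↦ hLf ?_, re_mem_realValued _, hg_le _, hLg⟩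
    rw [ZeroMemClass.coe_eq_zero.1 h, map_zero, norm_zero] at hLg
    exact norm_le_zero_iff.1 hLg

end ContinuousMap

open ContinuousMap in
theorem complex_to_real_extremal_problem_general {m : ℕ}
    (K : Set (EuclideanSpace ℝ (Fin m))) [CompactSpace K]
    (B : Submodule ℂ C(K, ℂ))
    (hspan : B = Submodule.span ℂ
      ((B : Set C(K, ℂ)) ∩ {f : C(K, ℂ) | ∀ x : K, (f x).im = 0}))
    (L : B →ₗ[ℂ] C(K, ℂ))
    (hreal : ∀ h : B, (∀ x : K, ((h : C(K, ℂ)) x).im = 0) → ∀ x : K, (L h x).im = 0)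
    (N : C(K, ℂ) → ℝ)
    (hN_pos : ∀ h : B, (h : C(K, ℂ)) ≠ 0 → 0 < N h)
    (hN_mono : ∀ g h : C(K, ℂ), (∀ x : K, ‖g x‖ ≤ ‖h x‖) →
      N g ≤ N h) :
    sSup {r : ℝ | ∃ h : B, (h : C(K, ℂ)) ≠ 0 ∧ r = ‖L h‖ / N h} =
      sSup {r : ℝ | ∃ h : B, (h : C(K, ℂ)) ≠ 0 ∧
        (∀ x : K, ((h : C(K, ℂ)) x).im = 0) ∧ r = ‖L h‖ / N h} := by
  apply csSup_eq_csSup_of_forall_exists_le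
  · rintro _ ⟨h, hh, rfl⟩
    obtain ⟨g, hg, hg_real, hg_le, hLg⟩ :=
      exists_realValued_norm_apply_le_and_norm_map_le hspan L hreal hh
    exact ⟨_, ⟨g, hg, hg_real, rfl⟩,
      div_le_div₀ (norm_nonneg _) hLg (hN_pos g hg) (hN_mono _ _ hg_le)⟩
  · rintro _ ⟨g, hg, -, rfl⟩
    exact ⟨_, ⟨g, hg, rfl⟩, le_rfl⟩

/-- reduction of Markov–Bernstein–Nikolskii type extremal problems for
complex-valued functions to real-valued ones. `K` is a compact subset of ℝ^m, `B` a
subspace of `C(K, ℂ)` spanned by its real-valued elements, `L` a linear operator on `B`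
with values in `C(K, ℂ)`, bounded with respect to a monotone norm `N` on `B`, mapping
real-valued functions to real-valued functions. -/
theorem complex_to_real_extremal_problem {m : ℕ}
    (K : Set (EuclideanSpace ℝ (Fin m))) [CompactSpace K]
    (B : Submodule ℂ C(K, ℂ))
    (hspan : B = Submodule.span ℂ
      ((B : Set C(K, ℂ)) ∩ {f : C(K, ℂ) | ∀ x : K, (f x).im = 0}))
    (L : B →ₗ[ℂ] C(K, ℂ))
    (hreal : ∀ h : B, (∀ x : K, ((h : C(K, ℂ)) x).im = 0) → ∀ x : K, (L h x).im = 0)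
    (N : C(K, ℂ) → ℝ)
    (hN_pos : ∀ h : B, (h : C(K, ℂ)) ≠ 0 → 0 < N h)
    (hN_mono : ∀ g h : C(K, ℂ), (∀ x : K, ‖g x‖ ≤ ‖h x‖) →
      N g ≤ N h)
    (hbdd : ∃ C : ℝ, ∀ h : B, ‖L h‖ ≤ C * N h) :
    sSup {r : ℝ | ∃ h : B, (h : C(K, ℂ)) ≠ 0 ∧ r = ‖L h‖ / N h} =
      sSup {r : ℝ | ∃ h : B, (h : C(K, ℂ)) ≠ 0 ∧
        (∀ x : K, ((h : C(K, ℂ)) x).im = 0) ∧ r = ‖L h‖ / N h} :=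
  complex_to_real_extremal_problem_general K B hspan L hreal N hN_pos hN_mono
end

section
/- For every complex polynomial P of degree at most n, every b > 0, every l with 0 ≤ l ≤ n, and every real u with |u| > b, one has |P^(l)(u)| ≤ b^{−l} |T_n^{(l)}(u/b)| · max_{x∈[−b,b]} |P(x)|. -/
/-!
Rescaling `P` to `P (b X)` reduces the claim to `b = 1`. Lagrange interpolation at the Chebyshev
extremal nodes `xₖ = cos (k π / n)`, `0 ≤ k ≤ n`, gives `P⁽ˡ⁾(x) = ∑ₖ P(xₖ) cₖ` with
`cₖ = Lₖ⁽ˡ⁾(x)`. For `|x| ≥ 1` all the numbers `(-1)ᵏ cₖ` have one and the same sign: the numerator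
of `Lₖ` has all its roots in `[-1, 1]`, so its derivatives have a fixed sign beyond them, and the
denominator `∏ⱼ (xₖ - xⱼ)` has sign `(-1)ᵏ`. Hence
`|P⁽ˡ⁾(x)| ≤ max |P| · ∑ₖ |cₖ| = max |P| · |∑ₖ (-1)ᵏ cₖ| = max |P| · |T_n⁽ˡ⁾(x)|`,
the last step because `T_n(xₖ) = (-1)ᵏ`.
-/

open Polynomial Finset

theorem Finset.sum_abs_eq_abs_sum_of_nonneg_mul {ι : Type*} {s : Finset ι} {f : ι → ℝ} {σ : ℝ}
    (hσ : σ ≠ 0) (h : ∀ i ∈ s, 0 ≤ σ * f i) : ∑ i ∈ s, |f i| = |∑ i ∈ s, f i| := by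
  refine mul_left_cancel₀ (abs_ne_zero.mpr hσ) ?_
  calc |σ| * ∑ i ∈ s, |f i| = ∑ i ∈ s, σ * f i := by
        rw [mul_sum]
        exact sum_congr rfl fun i hi => by rw [← abs_mul, abs_of_nonneg (h i hi)]
    _ = |σ| * |∑ i ∈ s, f i| := by rw [← abs_mul, mul_sum, abs_sum_of_nonneg h]

namespace Polynomial

theorem iterate_derivative_comp_C_mul_X {R : Type*} [CommSemiring R] (a : R) (p : R[X]) (l : ℕ) :
    derivative^[l] (p.comp (C a * X)) = C (a ^ l) * (derivative^[l] p).comp (C a * X) := by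
  induction l generalizing p with
  | zero => simp
  | succ l ih =>
    rw [Function.iterate_succ_apply, derivative_comp, derivative_C_mul_X,
      iterate_derivative_C_mul, ih, Function.iterate_succ_apply, pow_succ, C_mul]
    ring

theorem derivative_prod_X_sub_C {R ι : Type*} [CommRing R] [DecidableEq ι] (s : Finset ι)
    (r : ι → R) :
    derivative (∏ i ∈ s, (X - C (r i))) = ∑ i ∈ s, ∏ j ∈ s.erase i, (X - C (r j)) := by
  simp [derivative_prod_finset]

theorem eval_iterate_derivative_prod_X_sub_C_nonneg {ι : Type*} {s : Finset ι} {r : ι → ℝ}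
    {x : ℝ} (hr : ∀ i ∈ s, r i ≤ x) (l : ℕ) :
    0 ≤ (derivative^[l] (∏ i ∈ s, (X - C (r i)))).eval x := by
  classical
  induction l generalizing s with
  | zero => simpa [eval_prod] using prod_nonneg fun i hi => sub_nonneg.mpr (hr i hi)
  | succ l ih =>
    rw [Function.iterate_succ_apply, derivative_prod_X_sub_C, iterate_derivative_sum,
      eval_finsetSum]
    exact sum_nonneg fun i _ => ih fun j hj => hr j (mem_of_mem_erase hj)

theorem neg_one_pow_mul_eval_iterate_derivative_prod_X_sub_C_nonneg {ι : Type*} {s : Finset ι}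
    {r : ι → ℝ} {x : ℝ} (hr : ∀ i ∈ s, x ≤ r i) (l : ℕ) :
    0 ≤ (-1) ^ (#s + l) * (derivative^[l] (∏ i ∈ s, (X - C (r i)))).eval x := by
  classical
  induction l generalizing s with
  | zero =>
    simp only [add_zero, Function.iterate_zero, id, eval_prod, eval_sub, eval_X, eval_C]
    rw [← prod_const (s := s), ← prod_mul_distrib]
    exact prod_nonneg fun i hi => by linarith [hr i hi]
  | succ l ih =>
    rw [Function.iterate_succ_apply, derivative_prod_X_sub_C, iterate_derivative_sum,
      eval_finsetSum, mul_sum]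
    refine sum_nonneg fun i hi => ?_
    have hcard : #s + (l + 1) = #(s.erase i) + l + 2 := by
      rw [card_erase_of_mem hi]; have := card_pos.mpr ⟨i, hi⟩; omega
    rw [hcard, pow_add, neg_one_sq, mul_one]
    exact ih fun j hj => hr j (mem_of_mem_erase hj)

end Polynomial

namespace Lagrange

variable {F ι : Type*} [Field F] [DecidableEq ι] {s : Finset ι} {v : ι → F}

theorem basis_eq_C_inv_mul_prod (i : ι) :
    Lagrange.basis s v i =
      C (∏ j ∈ s.erase i, (v i - v j))⁻¹ * ∏ j ∈ s.erase i, (X - C (v j)) := by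
  simp [Lagrange.basis, basisDivisor, prod_mul_distrib, ← map_prod, ← prod_inv_distrib]

theorem basis_map {K : Type*} [Field K] (f : F →+* K) (i : ι) :
    Lagrange.basis s (f ∘ v) i = (Lagrange.basis s v i).map f := by
  simp [Lagrange.basis, basisDivisor, Polynomial.map_prod]

theorem eval_iterate_derivative_eq_sum_mul_basis {K : Type*} [Field K] (f : F →+* K)
    (hvs : Set.InjOn v s) {P : K[X]} (hP : P.degree < #s) (l : ℕ) (x : F) :
    (derivative^[l] P).eval (f x) =
      ∑ i ∈ s, P.eval (f (v i)) * f ((derivative^[l] (Lagrange.basis s v i)).eval x) := by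
  have hfvs : Set.InjOn (f ∘ v) s := f.injective.comp_injOn hvs
  conv_lhs => rw [eq_interpolate hfvs hP, interpolate_apply]
  simp [iterate_derivative_sum, iterate_derivative_C_mul, eval_finsetSum, basis_map,
    iterate_derivative_map]

end Lagrange

namespace Polynomial.Chebyshev

theorem sum_abs_eval_iterate_derivative_basis_node (n l : ℕ) {x : ℝ} (hx : 1 ≤ |x|) :
    ∑ i ∈ range (n + 1), |(derivative^[l] (Lagrange.basis (range (n + 1)) (node n) i)).eval x| =
      |∑ i ∈ range (n + 1),
        (-1) ^ i * (derivative^[l] (Lagrange.basis (range (n + 1)) (node n) i)).eval x| := by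
  set s := range (n + 1)
  set Q : ℕ → ℝ[X] := fun i => ∏ j ∈ s.erase i, (X - Polynomial.C (node n j))
  obtain ⟨σ, hσ, hQ⟩ : ∃ σ : ℝ, σ ≠ 0 ∧ ∀ i ∈ s, 0 ≤ σ * (derivative^[l] (Q i)).eval x := by
    rcases le_abs'.mp hx with hx | hx
    · refine ⟨(-1) ^ (n + l), by simp, fun i hi => ?_⟩
      have hcard : #(s.erase i) = n := by simp [s, card_erase_of_mem hi]
      simpa [Q, hcard] using neg_one_pow_mul_eval_iterate_derivative_prod_X_sub_C_nonneg
        (s := s.erase i) (fun j _ => hx.trans node_mem_Icc.1) l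
    · refine ⟨1, one_ne_zero, fun i _ => ?_⟩
      rw [one_mul]
      exact eval_iterate_derivative_prod_X_sub_C_nonneg (fun j _ => node_mem_Icc.2.trans hx) l
  have hbasis : ∀ i ∈ s, (-1) ^ i * (derivative^[l] (Lagrange.basis s (node n) i)).eval x =
      ((-1) ^ i * ∏ j ∈ s.erase i, (node n i - node n j))⁻¹ * (derivative^[l] (Q i)).eval x := by
    intro i _
    rw [Lagrange.basis_eq_C_inv_mul_prod, iterate_derivative_C_mul, eval_mul, eval_C, mul_inv,
      ← inv_pow, inv_neg_one, mul_assoc]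
  rw [← sum_abs_eq_abs_sum_of_nonneg_mul hσ (s := s) fun i hi => ?_]
  · exact sum_congr rfl fun i _ => by rw [abs_mul, abs_neg_one_pow, one_mul]
  · rw [hbasis i hi, mul_left_comm]
    exact mul_nonneg (inv_nonneg.mpr (zero_lt_prod_node_sub_node
      (mem_range_succ_iff.mp hi)).le) (hQ i hi)

theorem norm_eval_iterate_derivative_le_of_norm_eval_node_le {n : ℕ} {P : ℂ[X]}
    (hP : P.degree ≤ n) {M : ℝ} (hM : ∀ i ≤ n, ‖P.eval (node n i : ℂ)‖ ≤ M) (l : ℕ) {x : ℝ}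
    (hx : 1 ≤ |x|) :
    ‖(derivative^[l] P).eval (x : ℂ)‖ ≤ M * |(derivative^[l] (T ℝ n)).eval x| := by
  set s := range (n + 1)
  set c : ℕ → ℝ := fun i => (derivative^[l] (Lagrange.basis s (node n) i)).eval x
  have hinj : Set.InjOn (node n) s := (strictAntiOn_node n).injOn
  have hcard : (n : WithBot ℕ) < #s := by
    rw [card_range]; exact_mod_cast n.lt_succ_self
  have hPc : (derivative^[l] P).eval (x : ℂ) = ∑ i ∈ s, P.eval (node n i : ℂ) * c i :=
    Lagrange.eval_iterate_derivative_eq_sum_mul_basis Complex.ofRealHom hinj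
      (hP.trans_lt hcard) l x
  have hTc : (derivative^[l] (T ℝ n)).eval x = ∑ i ∈ s, (-1) ^ i * c i := by
    rw [← RingHom.id_apply x, Lagrange.eval_iterate_derivative_eq_sum_mul_basis (RingHom.id ℝ)
      hinj ((degree_T ℝ n).trans_lt (by simpa using hcard)) l x]
    exact sum_congr rfl fun i hi => by
      rw [RingHom.id_apply, RingHom.id_apply, eval_T_real_node (by simpa [s] using hi)]
  calc ‖(derivative^[l] P).eval (x : ℂ)‖
      ≤ ∑ i ∈ s, ‖P.eval (node n i : ℂ)‖ * |c i| := by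
        rw [hPc]
        refine (norm_sum_le _ _).trans_eq (sum_congr rfl fun i _ => ?_)
        rw [norm_mul, Complex.norm_real, Real.norm_eq_abs]
    _ ≤ ∑ i ∈ s, M * |c i| := by
        gcongr with i hi
        exact hM i (mem_range_succ_iff.mp hi)
    _ = M * |(derivative^[l] (T ℝ n)).eval x| := by
        rw [← mul_sum, sum_abs_eval_iterate_derivative_basis_node n l hx, hTc]

end Polynomial.Chebyshev

theorem chebyshev_derivative_bound_outside_general (n : ℕ) (P : Polynomial ℂ)
    (hdeg : P.degree ≤ n) (b : ℝ) (hb : 0 < b) (l : ℕ)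
    (u : ℝ) (hu : b < |u|) :
    ‖(Polynomial.derivative^[l] P).eval (u : ℂ)‖ ≤
      b ^ (-(l : ℤ)) * |(Polynomial.derivative^[l] (Chebyshev.T ℝ n)).eval (u / b)| *
        sSup ((fun x : ℝ => ‖P.eval (x : ℂ)‖) '' Set.Icc (-b) b) := by
  set M := sSup ((fun x : ℝ => ‖P.eval (x : ℂ)‖) '' Set.Icc (-b) b)
  set Pb := P.comp (C (b : ℂ) * X)
  have hPb : Pb.degree ≤ n := (degree_le_iff_coeff_zero _ _).mpr fun m hm => by
    rw [comp_C_mul_X_coeff, coeff_eq_zero_of_degree_lt (hdeg.trans_lt hm), zero_mul]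
  have hbdd : BddAbove ((fun x : ℝ => ‖P.eval (x : ℂ)‖) '' Set.Icc (-b) b) :=
    isCompact_Icc.bddAbove_image (by fun_prop)
  have hPbM : ∀ i ≤ n, ‖Pb.eval (Chebyshev.node n i : ℂ)‖ ≤ M := fun i _ => by
    refine le_csSup hbdd ⟨b * Chebyshev.node n i, abs_le.mp ?_, by simp [Pb]⟩
    rw [abs_mul, abs_of_pos hb]
    exact mul_le_of_le_one_right hb.le (abs_le.mpr Chebyshev.node_mem_Icc)
  have hx : 1 ≤ |u / b| := by
    rw [abs_div, abs_of_pos hb, le_div_iff₀ hb, one_mul]; exact hu.le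
  have hscale :
      (derivative^[l] Pb).eval ((u / b : ℝ) : ℂ) = b ^ l * (derivative^[l] P).eval (u : ℂ) := by
    rw [iterate_derivative_comp_C_mul_X, eval_mul, eval_C, eval_comp, eval_mul, eval_C, eval_X,
      Complex.ofReal_div, mul_div_cancel₀ _ (Complex.ofReal_ne_zero.mpr hb.ne')]
  have hbound := Chebyshev.norm_eval_iterate_derivative_le_of_norm_eval_node_le hPb hPbM l hx
  rw [hscale, norm_mul, norm_pow, Complex.norm_real, Real.norm_of_nonneg hb.le] at hbound
  rw [zpow_neg, zpow_natCast, inv_mul_eq_div, div_mul_eq_mul_div, le_div_iff₀ (pow_pos hb l)]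
  linarith

/-- a Chebyshev-type estimate for derivatives of a complex polynomial
outside the interval [−b, b]. -/
theorem chebyshev_derivative_bound_outside (n : ℕ) (P : Polynomial ℂ)
    (hdeg : P.degree ≤ n) (b : ℝ) (hb : 0 < b) (l : ℕ) (hl : l ≤ n)
    (u : ℝ) (hu : b < |u|) :
    ‖(Polynomial.derivative^[l] P).eval (u : ℂ)‖ ≤
      b ^ (-(l : ℤ)) * |(Polynomial.derivative^[l] (Chebyshev.T ℝ n)).eval (u / b)| *
        sSup ((fun x : ℝ => ‖P.eval (x : ℂ)‖) '' Set.Icc (-b) b) :=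
  chebyshev_derivative_bound_outside_general n P hdeg b hb l u hu
end

section
/- Let V ⊂ ℝ^m be a centrally symmetric convex body with width w(V), and P a complex polynomial in m variables of total degree at most n. Then for every x ∈ ℝ^m \ V, |P(x)| ≤ T_n(2|x|/w(V)) · max_{y∈V} |P(y)|. -/
/-!
Restrict `P` to the line through `0` and `x`, parametrised so that `s ∈ [-1, 1]` sweeps the
segment of length `w(V)` centred at `0`, and `x` is reached at `t = 2‖x‖ / w(V)`. A centrally
symmetric convex body contains the closed ball of radius `w(V) / 2` (otherwise a separating
hyperplane would give a thinner slab), so that segment lies in `V`. It remains to prove the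
one-variable Chebyshev inequality `|q(t)| ≤ T_n(t) · max_{[-1,1]} |q|` for `t ≥ 1`: interpolate
`q` at the extremal points `cos (iπ/n)` of `T_n`; for `t ≥ 1` the `i`-th Lagrange basis
polynomial has sign `(-1)^i = T_n(cos (iπ/n))` at `t`, so summing absolute values reproduces the
interpolation formula for `T_n(t)`.
-/

open Polynomial Polynomial.Chebyshev Finset Metric

theorem Lagrange.map_basis {K L : Type*} [Field K] [Field L] {ι : Type*} [DecidableEq ι]
    (f : K →+* L) (s : Finset ι) (v : ι → K) (i : ι) :
    (Lagrange.basis s v i).map f = Lagrange.basis s (f ∘ v) i := by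
  simp [Lagrange.basis, Polynomial.map_prod, Lagrange.basisDivisor]

theorem Lagrange.eval_eq_sum_mul_eval_basis {F : Type*} [Field F] {ι : Type*} [DecidableEq ι]
    {s : Finset ι} {v : ι → F} (hvs : Set.InjOn v s) {f : F[X]} (hf : f.degree < #s) (t : F) :
    f.eval t = ∑ i ∈ s, f.eval (v i) * (Lagrange.basis s v i).eval t := by
  conv_lhs => rw [Lagrange.eq_interpolate hvs hf]
  simp [Lagrange.interpolate_apply, eval_finsetSum]

theorem degree_lt_card_range_of_natDegree_le {R : Type*} [Semiring R] {p : R[X]} {n : ℕ}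
    (hp : p.natDegree ≤ n) : p.degree < #(range (n + 1)) := by
  rw [card_range]
  exact (degree_le_of_natDegree_le hp).trans_lt (by exact_mod_cast n.lt_succ_self)

theorem negOnePow_mul_eval_basis_node_nonneg {n i : ℕ} (hi : i ≤ n) {t : ℝ} (ht : 1 ≤ t) :
    0 ≤ (-1) ^ i * (Lagrange.basis (range (n + 1)) (node n) i).eval t := by
  have hprod := zero_lt_prod_node_sub_node hi
  simp only [Lagrange.basis, Lagrange.basisDivisor, eval_prod, eval_mul, eval_C, eval_sub,
    eval_X, prod_mul_distrib, prod_inv_distrib]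
  have hsign : ((-1 : ℝ) ^ i * ∏ j ∈ (range (n + 1)).erase i, (node n i - node n j))⁻¹ =
      (-1) ^ i * (∏ j ∈ (range (n + 1)).erase i, (node n i - node n j))⁻¹ := by
    rw [mul_inv, ← inv_pow, inv_neg_one]
  rw [← mul_assoc, ← hsign]
  exact mul_nonneg (inv_nonneg.2 hprod.le)
    (prod_nonneg fun j _ => sub_nonneg.2 (node_mem_Icc.2.trans ht))

theorem sum_negOnePow_mul_eval_basis_node (n : ℕ) (t : ℝ) :
    ∑ i ∈ range (n + 1), (-1) ^ i * (Lagrange.basis (range (n + 1)) (node n) i).eval t =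
      (T ℝ n).eval t := by
  rw [Lagrange.eval_eq_sum_mul_eval_basis (strictAntiOn_node n).injOn
    (degree_lt_card_range_of_natDegree_le (natDegree_T ℝ n).le)]
  refine sum_congr rfl fun i hi => ?_
  rw [eval_T_real_node (by simpa [Nat.lt_succ_iff] using hi)]

theorem norm_eval_le_eval_T_mul {𝕜 : Type*} [RCLike 𝕜] {n : ℕ} {q : 𝕜[X]}
    (hq : q.natDegree ≤ n) {M : ℝ}
    (hM : ∀ s ∈ Set.Icc (-1 : ℝ) 1, ‖q.eval (s : 𝕜)‖ ≤ M)
    {t : ℝ} (ht : 1 ≤ t) :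
    ‖q.eval (t : 𝕜)‖ ≤ (T ℝ n).eval t * M := by
  set ℓ : ℕ → ℝ := fun i => (Lagrange.basis (range (n + 1)) (node n) i).eval t
  have hinj : Set.InjOn (fun i => (node n i : 𝕜)) (range (n + 1)) :=
    RCLike.ofReal_injective.comp_injOn (strictAntiOn_node n).injOn
  have habs : ∀ i ∈ range (n + 1), |ℓ i| = (-1) ^ i * ℓ i := fun i hi => by
    rw [← abs_of_nonneg (negOnePow_mul_eval_basis_node_nonneg
      (by simpa [Nat.lt_succ_iff] using hi) ht), abs_mul, abs_neg_one_pow, one_mul]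
  have hbasis : ∀ i,
      (Lagrange.basis (range (n + 1)) (fun j => (node n j : 𝕜)) i).eval (t : 𝕜) = ℓ i := by
    intro i
    have hnodes : (fun j => (node n j : 𝕜)) = algebraMap ℝ 𝕜 ∘ node n := rfl
    rw [hnodes, ← Lagrange.map_basis, eval_map, ← RCLike.algebraMap_eq_ofReal, eval₂_at_apply]
  calc ‖q.eval (t : 𝕜)‖
      = ‖∑ i ∈ range (n + 1), q.eval (node n i : 𝕜) * (ℓ i : 𝕜)‖ := by
        rw [Lagrange.eval_eq_sum_mul_eval_basis hinj (degree_lt_card_range_of_natDegree_le hq)]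
        simp only [hbasis]
    _ ≤ ∑ i ∈ range (n + 1), M * ((-1) ^ i * ℓ i) := by
        refine (norm_sum_le _ _).trans (sum_le_sum fun i hi => ?_)
        rw [norm_mul, RCLike.norm_ofReal, habs i hi]
        exact mul_le_mul_of_nonneg_right (hM _ node_mem_Icc) (by rw [← habs i hi]; positivity)
    _ = (T ℝ n).eval t * M := by
        rw [← mul_sum, sum_negOnePow_mul_eval_basis_node, mul_comm]

namespace MvPolynomial

variable {σ R : Type*} [CommSemiring R]

noncomputable def restrictToLine (c : σ → R) (P : MvPolynomial σ R) : R[X] :=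
  aeval (fun i => Polynomial.C (c i) * Polynomial.X) P

theorem eval_restrictToLine (c : σ → R) (P : MvPolynomial σ R) (z : R) :
    (restrictToLine c P).eval z = eval (z • c) P := by
  have hline : (fun i => Polynomial.aeval z (Polynomial.C (c i) * Polynomial.X)) = z • c := by
    funext i
    simp only [map_mul, Polynomial.aeval_C, Polynomial.aeval_X, Algebra.algebraMap_self,
      RingHom.id_apply, Pi.smul_apply, smul_eq_mul, mul_comm]
  rw [restrictToLine, ← Polynomial.coe_aeval_eq_eval, ← AlgHom.comp_apply, comp_aeval, hline]
  rfl

theorem natDegree_aeval_le_totalDegree (g : σ → R[X]) (hg : ∀ i, (g i).natDegree ≤ 1)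
    (P : MvPolynomial σ R) : (aeval g P).natDegree ≤ P.totalDegree := by
  rw [aeval_eq_eval₂Hom, coe_eval₂Hom, eval₂_eq]
  refine natDegree_sum_le_of_forall_le _ _ fun d hd => ?_
  refine (natDegree_C_mul_le _ _).trans ?_
  calc (∏ i ∈ d.support, g i ^ d i).natDegree
      ≤ ∑ i ∈ d.support, (g i ^ d i).natDegree := natDegree_prod_le _ _
    _ ≤ ∑ i ∈ d.support, d i := sum_le_sum fun i _ =>
        natDegree_pow_le.trans (by simpa using Nat.mul_le_mul_left (d i) (hg i))
    _ ≤ P.totalDegree := le_totalDegree hd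

theorem natDegree_restrictToLine_le (c : σ → R) (P : MvPolynomial σ R) :
    (restrictToLine c P).natDegree ≤ P.totalDegree :=
  natDegree_aeval_le_totalDegree _ (fun _ => (natDegree_C_mul_le _ _).trans natDegree_X_le) P

theorem norm_eval_smul_le_eval_T_mul {𝕜 ι : Type*} [RCLike 𝕜] {n : ℕ}
    {P : MvPolynomial ι 𝕜} (hP : P.totalDegree ≤ n) (c : EuclideanSpace ℝ ι) {M : ℝ}
    (hM : ∀ s ∈ Set.Icc (-1 : ℝ) 1, ‖eval (fun i => ((s • c) i : 𝕜)) P‖ ≤ M)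
    {t : ℝ} (ht : 1 ≤ t) :
    ‖eval (fun i => ((t • c) i : 𝕜)) P‖ ≤ (T ℝ n).eval t * M := by
  have hline : ∀ s : ℝ, (restrictToLine (fun i => (c i : 𝕜)) P).eval (s : 𝕜) =
      eval (fun i => ((s • c) i : 𝕜)) P := fun s => by
    have hcoord : (s : 𝕜) • (fun i => (c i : 𝕜)) = fun i => ((s • c) i : 𝕜) := by
      funext i
      simp
    rw [eval_restrictToLine, hcoord]
  rw [← hline]
  exact norm_eval_le_eval_T_mul ((natDegree_restrictToLine_le _ P).trans hP)
    (fun s hs => hline s ▸ hM s hs) ht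

end MvPolynomial

section SupportFunction

variable {E : Type*} [NormedAddCommGroup E] [InnerProductSpace ℝ E]

noncomputable def supportFunction (V : Set E) (u : E) : ℝ :=
  sSup ((fun y => inner ℝ u y) '' V)

noncomputable def width (V : Set E) : ℝ :=
  sInf {r : ℝ | ∃ u : E, ‖u‖ = 1 ∧ r = 2 * supportFunction V u}

theorem Convex.zero_mem_of_neg_eq {V : Set E} (hconv : Convex ℝ V) (hsymm : V = -V)
    (hne : V.Nonempty) : (0 : E) ∈ V := by
  obtain ⟨y, hy⟩ := hne
  have hny : -y ∈ V := by rwa [hsymm, Set.neg_mem_neg]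
  simpa using hconv.midpoint_mem hy hny

theorem supportFunction_nonneg {V : Set E} (hcomp : IsCompact V) (h0 : (0 : E) ∈ V) (u : E) :
    0 ≤ supportFunction V u :=
  le_csSup ((hcomp.image (continuous_const.inner continuous_id)).bddAbove)
    ⟨0, h0, inner_zero_right u⟩

theorem width_le_two_mul_supportFunction {V : Set E} (hcomp : IsCompact V) (h0 : (0 : E) ∈ V)
    {u : E} (hu : ‖u‖ = 1) : width V ≤ 2 * supportFunction V u := by
  refine csInf_le ⟨0, ?_⟩ ⟨u, hu, rfl⟩
  rintro _ ⟨v, -, rfl⟩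
  linarith [supportFunction_nonneg hcomp h0 v]

theorem closedBall_subset_of_forall_le_supportFunction [CompleteSpace E] {V : Set E}
    (hconv : Convex ℝ V) (hclosed : IsClosed V) (hne : V.Nonempty) {r : ℝ}
    (hr : ∀ u : E, ‖u‖ = 1 → r ≤ supportFunction V u) :
    closedBall (0 : E) r ⊆ V := by
  intro p hp
  by_contra hpV
  obtain ⟨f, a, hfV, hfp⟩ := geometric_hahn_banach_closed_point hconv hclosed hpV
  set w := (InnerProductSpace.toDual ℝ E).symm f
  have hw : ∀ y, inner ℝ w y = f y := fun y => InnerProductSpace.toDual_symm_apply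
  have hw0 : w ≠ 0 := by
    rintro hw0
    obtain ⟨y, hy⟩ := hne
    have := hfV y hy
    simp only [← hw, hw0, inner_zero_left] at this hfp
    linarith
  set u := ‖w‖⁻¹ • w
  have hu : ‖u‖ = 1 := norm_smul_inv_norm hw0
  have hu_inner : ∀ y, inner ℝ u y = ‖w‖⁻¹ * f y := fun y => by
    rw [real_inner_smul_left, hw]
  have hsup : supportFunction V u ≤ ‖w‖⁻¹ * a := by
    refine csSup_le (hne.image _) ?_
    rintro _ ⟨y, hy, rfl⟩
    simp only [hu_inner]
    exact mul_le_mul_of_nonneg_left (hfV y hy).le (by positivity)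
  have hup : ‖w‖⁻¹ * a < inner ℝ u p := by
    rw [hu_inner]
    exact mul_lt_mul_of_pos_left hfp (by positivity)
  have hpr : inner ℝ u p ≤ r := calc
    inner ℝ u p ≤ ‖u‖ * ‖p‖ := real_inner_le_norm u p
    _ = ‖p‖ := by rw [hu, one_mul]
    _ ≤ r := mem_closedBall_zero_iff.1 hp
  linarith [hr u hu]

theorem closedBall_half_width_subset [CompleteSpace E] {V : Set E} (hconv : Convex ℝ V)
    (hcomp : IsCompact V) (hsymm : V = -V) (hne : V.Nonempty) :
    closedBall (0 : E) (width V / 2) ⊆ V :=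
  closedBall_subset_of_forall_le_supportFunction hconv hcomp.isClosed hne fun _ hu => by
    linarith [width_le_two_mul_supportFunction hcomp (hconv.zero_mem_of_neg_eq hsymm hne) hu]

end SupportFunction

/-- Chebyshev-type growth estimate outside a centrally symmetric convex body,
with `wV` the width of `V` (the minimum over unit directions `u` of the slab width
`2 * sup_{y ∈ V} ⟪u, y⟫`). -/
theorem chebyshev_bound_outside_convex_body {m : ℕ} (n : ℕ)
    (V : Set (EuclideanSpace ℝ (Fin m)))
    (hVconv : Convex ℝ V) (hVcomp : IsCompact V) (hVsymm : V = -V)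
    (hVint : (interior V).Nonempty)
    (P : MvPolynomial (Fin m) ℂ) (hdeg : P.totalDegree ≤ n)
    (wV : ℝ) (hwpos : 0 < wV)
    (hwV : wV = sInf {r : ℝ | ∃ u : EuclideanSpace ℝ (Fin m), ‖u‖ = 1 ∧
      r = 2 * sSup ((fun y : EuclideanSpace ℝ (Fin m) => (inner ℝ u y : ℝ)) '' V)}) :
    ∀ x : EuclideanSpace ℝ (Fin m), x ∉ V →
      ‖MvPolynomial.eval (fun i => (x i : ℂ)) P‖ ≤
        (Chebyshev.T ℝ n).eval (2 * ‖x‖ / wV) *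
          sSup ((fun y : EuclideanSpace ℝ (Fin m) =>
            ‖MvPolynomial.eval (fun i => (y i : ℂ)) P‖) '' V) := by
  intro x hx
  have hball : closedBall 0 (wV / 2) ⊆ V := by
    rw [hwV]
    exact closedBall_half_width_subset hVconv hVcomp hVsymm (hVint.mono interior_subset)
  have hxw : wV / 2 < ‖x‖ := lt_of_not_ge fun h => hx (hball (mem_closedBall_zero_iff.2 h))
  have hx0 : ‖x‖ ≠ 0 := by linarith
  set c := (wV / (2 * ‖x‖)) • x
  have hc : ‖c‖ = wV / 2 := by
    rw [norm_smul, Real.norm_of_nonneg (by positivity)]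
    field_simp
  have hxc : (2 * ‖x‖ / wV) • c = x := by
    rw [smul_smul, div_mul_div_comm, mul_comm wV, div_self (by positivity), one_smul]
  have hcont : Continuous fun y : EuclideanSpace ℝ (Fin m) =>
      ‖MvPolynomial.eval (fun i => (y i : ℂ)) P‖ :=
    continuous_norm.comp ((MvPolynomial.continuous_eval P).comp
      (continuous_pi fun i => Complex.continuous_ofReal.comp (PiLp.continuous_apply 2 _ i)))
  have hbdd := (hVcomp.image hcont).bddAbove
  have ht : 1 ≤ 2 * ‖x‖ / wV := by rw [one_le_div hwpos]; linarith
  have hsegment : ∀ s ∈ Set.Icc (-1 : ℝ) 1, s • c ∈ V := fun s hs => hball (by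
    rw [mem_closedBall_zero_iff, norm_smul, Real.norm_eq_abs, hc]
    exact mul_le_of_le_one_left (by positivity) (abs_le.2 hs))
  have key := MvPolynomial.norm_eval_smul_le_eval_T_mul hdeg c
    (fun s hs => le_csSup hbdd ⟨s • c, hsegment s hs, rfl⟩) ht
  rw [hxc] at key
  exact key
end

section
/- Let U(y) = Σ_{k∈ℤ₊^m, k_j≤n} c_k y^k be a complex polynomial of degree at most n in each of m variables, and let 0 < A < B. Then Σ_k |c_k| ≤ [T_n((B+A+2)/(B−A))]^m · max_{y∈[A,B]^m} |U(y)|. -/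
/-!
Interpolate at the Chebyshev extremal points `x₀ < ⋯ < xₙ` of `[A, B]`, with Lagrange basis
`Lᵢ`. A univariate polynomial `p` of degree `≤ n` has `p.coeff k = ∑ᵢ (Lᵢ.coeff k) p(xᵢ)`;
tensoring this in all `m` variables bounds `∑ₖ |c_k|` by `(∑ᵢ ∑ₖ |Lᵢ.coeff k|) ^ m · max |U|`.

Since the nodes are positive, the coefficients of `Lᵢ` alternate in sign, so
`∑ₖ |Lᵢ.coeff k| = |Lᵢ(-1)|`; since `-1` lies left of all nodes, `Lᵢ(-1)` has sign `(-1) ^ i`.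
Hence `∑ᵢ |Lᵢ(-1)| = p(-1)` for the interpolant `p` of the values `(-1) ^ i`, which is `Tₙ`
composed with the affine map sending `[A, B]` onto `[1, -1]`; at `-1` it is
`Tₙ((B + A + 2) / (B - A))`.
-/

open Polynomial Finset

namespace Lagrange

section OrderedRing

variable {R ι : Type*} [CommRing R] [LinearOrder R] [IsStrictOrderedRing R]

theorem neg_one_pow_mul_coeff_nodal_nonneg (s : Finset ι) {v : ι → R} (hv : ∀ i ∈ s, 0 ≤ v i)
    (k : ℕ) : 0 ≤ (-1) ^ (#s + k) * (nodal s v).coeff k := by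
  classical
  induction s using Finset.induction_on generalizing k with
  | empty => by_cases hk : k = 0 <;> simp [nodal, coeff_one, hk]
  | @insert a s ha ih =>
    have hs : ∀ i ∈ s, 0 ≤ v i := fun i hi => hv i (mem_insert_of_mem hi)
    have hva : 0 ≤ v a := hv a (mem_insert_self a s)
    rw [nodal_insert_eq_nodal ha, card_insert_of_notMem ha]
    rcases k with _ | k
    · have h := mul_nonneg hva (ih hs 0)
      simp only [mul_coeff_zero, coeff_sub, coeff_X_zero, coeff_C_zero, zero_sub]
      calc (0 : R) ≤ v a * ((-1) ^ (#s + 0) * (nodal s v).coeff 0) := h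
        _ = _ := by ring
    · have h := add_nonneg (ih hs k) (mul_nonneg hva (ih hs (k + 1)))
      rw [coeff_X_sub_C_mul]
      calc (0 : R) ≤ _ := h
        _ = _ := by ring

theorem sum_abs_coeff_nodal (s : Finset ι) {v : ι → R} (hv : ∀ i ∈ s, 0 ≤ v i) :
    ∑ k ∈ range (#s + 1), |(nodal s v).coeff k| = |(nodal s v).eval (-1)| := by
  have habs (k : ℕ) : |(nodal s v).coeff k| = (-1) ^ #s * ((nodal s v).coeff k * (-1) ^ k) :=
    calc |(nodal s v).coeff k| = |(-1) ^ (#s + k) * (nodal s v).coeff k| := by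
          rw [abs_mul, abs_neg_one_pow, one_mul]
      _ = _ := abs_of_nonneg (neg_one_pow_mul_coeff_nodal_nonneg s hv k)
      _ = _ := by ring
  have hdeg : (nodal s v).natDegree < #s + 1 := by
    rw [natDegree_nodal]; exact Nat.lt_succ_self _
  have hsum : ∑ k ∈ range (#s + 1), |(nodal s v).coeff k| =
      (-1) ^ #s * (nodal s v).eval (-1) := by
    rw [sum_congr rfl fun k _ => habs k, ← mul_sum, ← eval_eq_sum_range' hdeg]
  rw [← abs_of_nonneg (sum_nonneg fun k _ => abs_nonneg ((nodal s v).coeff k)), hsum, abs_mul,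
    abs_neg_one_pow, one_mul]

end OrderedRing

variable {F ι : Type*} [Field F]

theorem coeff_eq_sum_eval_mul_coeff_basis [DecidableEq ι] {s : Finset ι} {v : ι → F}
    (hvs : Set.InjOn v s) {p : F[X]} (hp : p.degree < #s) (k : ℕ) :
    p.coeff k = ∑ i ∈ s, p.eval (v i) * (Lagrange.basis s v i).coeff k := by
  conv_lhs => rw [eq_interpolate hvs hp, interpolate_apply]
  simp only [finsetSum_coeff, coeff_C_mul]

theorem sum_coeff_basis_mul_pow [DecidableEq ι] {s : Finset ι} {v : ι → F}
    (hvs : Set.InjOn v s) {d : ℕ} (hd : d < #s) (k : ℕ) :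
    ∑ i ∈ s, (Lagrange.basis s v i).coeff k * v i ^ d = if k = d then 1 else 0 := by
  have h := coeff_eq_sum_eval_mul_coeff_basis hvs (p := X ^ d)
    (by rw [degree_X_pow]; exact_mod_cast hd) k
  simp only [coeff_X_pow, eval_pow, eval_X] at h
  rw [h]
  exact sum_congr rfl fun i _ => mul_comm _ _

section OrderedField

variable [LinearOrder F] [IsStrictOrderedRing F]

theorem sum_abs_coeff_basis [DecidableEq ι] {s : Finset ι} {v : ι → F} (hv : ∀ j ∈ s, 0 ≤ v j)
    {i : ι} (hi : i ∈ s) :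
    ∑ k ∈ range #s, |(Lagrange.basis s v i).coeff k| = |(Lagrange.basis s v i).eval (-1)| := by
  have hcard : #(s.erase i) + 1 = #s := card_erase_add_one hi
  rw [basis_eq_prod_sub_inv_mul_nodal_div hi, ← nodal_erase_eq_nodal_div hi, eval_mul, eval_C,
    abs_mul]
  simp only [coeff_C_mul, abs_mul]
  rw [← mul_sum, ← hcard, sum_abs_coeff_nodal _ fun j hj => hv j (mem_of_mem_erase hj)]

theorem neg_one_pow_mul_eval_basis_nonneg {n : ℕ} {v : ℕ → F}
    (hv : StrictMonoOn v (range (n + 1))) {z : F} (hz : z < v 0) {i : ℕ} (hi : i ≤ n) :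
    0 ≤ (-1) ^ i * (Lagrange.basis (range (n + 1)) v i).eval z := by
  have hv_lt {j k : ℕ} (hk : k ≤ n) (hjk : j < k) : v j < v k :=
    hv (mem_coe.2 (mem_range.2 (by omega))) (mem_coe.2 (mem_range.2 (by omega))) hjk
  have hz_lt (j : ℕ) (hj : j ≤ n) : z < v j := by
    rcases j.eq_zero_or_pos with rfl | hj0
    · exact hz
    · exact hz.trans (hv_lt hj hj0)
  have hsplit : (range (n + 1)).erase i = range i ∪ Ioc i n := by grind
  have hdisj : Disjoint (range i) (Ioc i n) := by grind [Finset.disjoint_iff_ne]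
  set f : ℕ → F := fun j => (v i - v j)⁻¹ * (z - v j)
  have heval : (Lagrange.basis (range (n + 1)) v i).eval z =
      (∏ j ∈ range i, f j) * ∏ j ∈ Ioc i n, f j := by
    rw [Lagrange.basis, eval_prod, hsplit, prod_union hdisj]
    simp [basisDivisor, f]
  have hlow : ∀ j ∈ range i, 0 ≤ -f j := fun j hj => by
    have := hv_lt hi (mem_range.1 hj)
    have := hz_lt j (by grind)
    simp only [f, ← mul_neg, neg_sub]
    exact mul_nonneg (inv_nonneg.2 (by linarith)) (by linarith)
  have hhigh : ∀ j ∈ Ioc i n, 0 ≤ f j := fun j hj => by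
    have := hv_lt (mem_Ioc.1 hj).2 (mem_Ioc.1 hj).1
    have := hz_lt j (mem_Ioc.1 hj).2
    exact mul_nonneg_of_nonpos_of_nonpos (inv_nonpos.2 (by linarith)) (by linarith)
  have hsign : (-1) ^ i * ∏ j ∈ range i, f j = ∏ j ∈ range i, -f j := by
    rw [prod_neg, card_range]
  rw [heval, ← mul_assoc, hsign]
  exact mul_nonneg (prod_nonneg hlow) (prod_nonneg hhigh)

theorem sum_abs_eval_basis {n : ℕ} {v : ℕ → F} (hv : StrictMonoOn v (range (n + 1))) {z : F}
    (hz : z < v 0) {p : F[X]} (hp : p.natDegree ≤ n) (hpv : ∀ i ≤ n, p.eval (v i) = (-1) ^ i) :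
    ∑ i ∈ range (n + 1), |(Lagrange.basis (range (n + 1)) v i).eval z| = p.eval z := by
  have hdeg : p.degree < #(range (n + 1)) := by
    rw [card_range]
    exact (degree_le_of_natDegree_le hp).trans_lt (by exact_mod_cast Nat.lt_succ_self n)
  conv_rhs => rw [eq_interpolate hv.injOn hdeg, interpolate_apply]
  simp only [eval_finsetSum, eval_mul, eval_C]
  refine sum_congr rfl fun i hi => ?_
  have hi : i ≤ n := Nat.lt_succ_iff.1 (mem_range.1 hi)
  rw [hpv i hi, ← abs_of_nonneg (neg_one_pow_mul_eval_basis_nonneg hv hz hi), abs_mul,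
    abs_neg_one_pow, one_mul]

end OrderedField

end Lagrange

namespace Polynomial.Chebyshev

noncomputable def nodeIcc (A B : ℝ) (n i : ℕ) : ℝ := (A + B - (B - A) * node n i) / 2

variable {A B : ℝ} {n : ℕ}

theorem nodeIcc_mem_Icc (hAB : A ≤ B) (i : ℕ) : nodeIcc A B n i ∈ Set.Icc A B := by
  obtain ⟨h₁, h₂⟩ := node_mem_Icc (n := n) (i := i)
  constructor <;> unfold nodeIcc <;> nlinarith

theorem strictMonoOn_nodeIcc (hAB : A < B) : StrictMonoOn (nodeIcc A B n) (range (n + 1)) :=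
  fun i hi j hj hij => by
    have := strictAntiOn_node n hi hj hij
    unfold nodeIcc
    nlinarith

theorem eval_T_nodeIcc (hAB : A < B) {i : ℕ} (hi : i ≤ n) :
    (T ℝ n).eval ((A + B - 2 * nodeIcc A B n i) / (B - A)) = (-1) ^ i := by
  have hBA : B - A ≠ 0 := (sub_pos.2 hAB).ne'
  rw [← eval_T_real_node (Finset.mem_Iic.2 hi), nodeIcc]
  congr 1
  field_simp
  ring

theorem sum_sum_abs_coeff_basis_nodeIcc (hA : 0 ≤ A) (hAB : A < B) :
    ∑ i ∈ range (n + 1), ∑ k ∈ range (n + 1),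
        |(Lagrange.basis (range (n + 1)) (nodeIcc A B n) i).coeff k| =
      (T ℝ n).eval ((B + A + 2) / (B - A)) := by
  have hBA : B - A ≠ 0 := (sub_pos.2 hAB).ne'
  set ℓ : ℝ[X] := Polynomial.C ((A + B) / (B - A)) - Polynomial.C (2 / (B - A)) * X
  have hℓ (y : ℝ) : ℓ.eval y = (A + B - 2 * y) / (B - A) := by
    simp only [ℓ, eval_sub, eval_C, eval_mul, eval_X]
    field_simp
  have hnonneg : ∀ j ∈ range (n + 1), 0 ≤ nodeIcc A B n j :=
    fun j _ => hA.trans (nodeIcc_mem_Icc hAB.le j).1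
  have hz : -1 < nodeIcc A B n 0 := by linarith [(nodeIcc_mem_Icc hAB.le (n := n) 0).1]
  have hdeg : ((T ℝ n).comp ℓ).natDegree ≤ n := by
    have hℓdeg : ℓ.natDegree ≤ 1 := by simp only [ℓ]; compute_degree
    calc ((T ℝ n).comp ℓ).natDegree ≤ (T ℝ n).natDegree * ℓ.natDegree := natDegree_comp_le
      _ ≤ n * 1 := by rw [natDegree_T]; exact Nat.mul_le_mul le_rfl hℓdeg
      _ = n := mul_one n
  calc _ = ∑ i ∈ range (n + 1), |(Lagrange.basis (range (n + 1)) (nodeIcc A B n) i).eval (-1)| :=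
        sum_congr rfl fun i hi => by
          simpa only [card_range] using Lagrange.sum_abs_coeff_basis hnonneg hi
    _ = ((T ℝ n).comp ℓ).eval (-1) :=
        Lagrange.sum_abs_eval_basis (strictMonoOn_nodeIcc hAB) hz hdeg
          fun i hi => by rw [eval_comp, hℓ]; exact eval_T_nodeIcc hAB hi
    _ = _ := by
        rw [eval_comp, hℓ]
        congr 1
        field_simp
        ring

end Polynomial.Chebyshev

namespace MvPolynomial

variable {R σ ι : Type*} [CommSemiring R] [Fintype σ] [DecidableEq σ]

theorem coeff_eq_sum_prod_mul_eval (s : Finset ι) (x : ι → R) (w : ℕ → ι → R) {n : ℕ}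
    (hw : ∀ k d, d ≤ n → ∑ i ∈ s, w k i * x i ^ d = if k = d then 1 else 0)
    {U : MvPolynomial σ R} (hU : ∀ j, U.degreeOf j ≤ n) (k : σ →₀ ℕ) :
    U.coeff k =
      ∑ i ∈ Fintype.piFinset fun _ => s, (∏ j, w (k j) (i j)) * eval (fun j => x (i j)) U := by
  have hdual (k' : σ →₀ ℕ) (hk' : k' ∈ U.support) :
      ∏ j, ∑ b ∈ s, w (k j) b * x b ^ k' j = if k = k' then 1 else 0 := by
    simp only [fun j => hw (k j) (k' j) ((monomial_le_degreeOf j hk').trans (hU j)),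
      Fintype.prod_boole, ← DFunLike.ext_iff]
  symm
  calc ∑ i ∈ Fintype.piFinset fun _ => s, (∏ j, w (k j) (i j)) * eval (fun j => x (i j)) U
      = ∑ i ∈ Fintype.piFinset fun _ => s, ∑ k' ∈ U.support,
          U.coeff k' * ∏ j, w (k j) (i j) * x (i j) ^ k' j := by
        refine sum_congr rfl fun i _ => ?_
        rw [eval_eq', mul_sum]
        refine sum_congr rfl fun k' _ => ?_
        rw [prod_mul_distrib]
        ring
    _ = ∑ k' ∈ U.support, U.coeff k' * ∏ j, ∑ b ∈ s, w (k j) b * x b ^ k' j := by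
        rw [sum_comm]
        simp only [← mul_sum, prod_univ_sum]
    _ = U.coeff k := by
        rw [sum_congr rfl fun k' hk' => by rw [hdual k' hk']]
        simp only [mul_ite, mul_one, mul_zero, sum_ite_eq]
        split_ifs with hk
        · rfl
        · exact (notMem_support_iff.1 hk).symm

theorem norm_coeff_le {𝕜 : Type*} [NormedCommRing 𝕜] [NormOneClass 𝕜] (s : Finset ι) (x : ι → 𝕜)
    (w : ℕ → ι → 𝕜) {n : ℕ}
    (hw : ∀ k d, d ≤ n → ∑ i ∈ s, w k i * x i ^ d = if k = d then 1 else 0)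
    {U : MvPolynomial σ 𝕜} (hU : ∀ j, U.degreeOf j ≤ n) {M : ℝ}
    (hM : ∀ i ∈ Fintype.piFinset fun _ => s, ‖eval (fun j => x (i j)) U‖ ≤ M) (k : σ →₀ ℕ) :
    ‖U.coeff k‖ ≤ (∏ j, ∑ b ∈ s, ‖w (k j) b‖) * M := by
  rw [coeff_eq_sum_prod_mul_eval s x w hw hU k, prod_univ_sum, sum_mul]
  refine (norm_sum_le _ _).trans (sum_le_sum fun i hi => ?_)
  refine (norm_mul_le _ _).trans ?_
  gcongr
  · exact Finset.norm_prod_le _ _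
  · exact hM i hi

end MvPolynomial

theorem Finsupp.sum_prod_le_sum_range_pow {σ R : Type*} [Fintype σ] [DecidableEq σ]
    [CommSemiring R] [PartialOrder R] [IsOrderedRing R] {S : Finset (σ →₀ ℕ)} {n : ℕ}
    (hS : ∀ k ∈ S, ∀ j, k j ≤ n) {a : ℕ → R} (ha : ∀ d, 0 ≤ a d) :
    ∑ k ∈ S, ∏ j, a (k j) ≤ (∑ d ∈ range (n + 1), a d) ^ Fintype.card σ := by
  rw [← card_univ, ← prod_const, prod_univ_sum,
    ← sum_image (g := DFunLike.coe) (f := fun k : σ → ℕ => ∏ j, a (k j))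
      fun k _ k' _ h => DFunLike.coe_injective h]
  refine sum_le_sum_of_subset_of_nonneg (fun f hf => ?_) fun f _ _ => prod_nonneg fun j _ => ha _
  obtain ⟨k, hk, rfl⟩ := mem_image.1 hf
  exact Fintype.mem_piFinset.2 fun j => mem_range.2 (Nat.lt_succ_of_le (hS k hk j))

theorem MvPolynomial.bddAbove_norm_eval_Icc {σ : Type*} (U : MvPolynomial σ ℂ) (A B : ℝ) :
    BddAbove {r : ℝ | ∃ y : σ → ℝ, (∀ j, y j ∈ Set.Icc A B) ∧
      r = ‖MvPolynomial.eval (fun j => (y j : ℂ)) U‖} := by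
  have hK : IsCompact (Set.univ.pi fun _ : σ => Set.Icc A B) :=
    isCompact_univ_pi fun _ => isCompact_Icc
  have hf : Continuous fun y : σ → ℝ => ‖MvPolynomial.eval (fun j => (y j : ℂ)) U‖ :=
    ((MvPolynomial.continuous_eval U).comp (continuous_pi fun j =>
      Complex.continuous_ofReal.comp (continuous_apply j))).norm
  obtain ⟨C, hC⟩ := (hK.image hf).bddAbove
  exact ⟨C, by rintro r ⟨y, hy, rfl⟩; exact hC ⟨y, fun j _ => hy j, rfl⟩⟩

theorem MvPolynomial.norm_eval_le_sSup_Icc {σ : Type*} (U : MvPolynomial σ ℂ) {A B : ℝ}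
    {y : σ → ℝ} (hy : ∀ j, y j ∈ Set.Icc A B) :
    ‖MvPolynomial.eval (fun j => (y j : ℂ)) U‖ ≤
      sSup {r : ℝ | ∃ y : σ → ℝ, (∀ j, y j ∈ Set.Icc A B) ∧
        r = ‖MvPolynomial.eval (fun j => (y j : ℂ)) U‖} :=
  le_csSup (U.bddAbove_norm_eval_Icc A B) ⟨y, hy, rfl⟩

/-- bound for the sum of moduli of coefficients of a multivariate complex
polynomial of degree at most `n` in each variable, in terms of its sup norm on `[A,B]^m`. -/
theorem coeff_sum_bound_Icc {m n : ℕ} (U : MvPolynomial (Fin m) ℂ)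
    (hdeg : ∀ j : Fin m, U.degreeOf j ≤ n) (A B : ℝ) (hA : 0 < A) (hAB : A < B) :
    ∑ k ∈ U.support, ‖U.coeff k‖ ≤
      ((Chebyshev.T ℝ n).eval ((B + A + 2) / (B - A))) ^ m *
        sSup {r : ℝ | ∃ y : Fin m → ℝ, (∀ j, y j ∈ Set.Icc A B) ∧
          r = ‖MvPolynomial.eval (fun j => (y j : ℂ)) U‖} := by
  set M := sSup {r : ℝ | ∃ y : Fin m → ℝ, (∀ j, y j ∈ Set.Icc A B) ∧
    r = ‖MvPolynomial.eval (fun j => (y j : ℂ)) U‖}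
  set L := Lagrange.basis (range (n + 1)) (Chebyshev.nodeIcc A B n)
  set a : ℕ → ℝ := fun d => ∑ i ∈ range (n + 1), |(L i).coeff d|
  have hM0 : 0 ≤ M :=
    (norm_nonneg _).trans (U.norm_eval_le_sSup_Icc fun _ => ⟨le_rfl, hAB.le⟩)
  have hw (k d : ℕ) (hd : d ≤ n) :
      ∑ i ∈ range (n + 1), ((L i).coeff k : ℂ) * (Chebyshev.nodeIcc A B n i : ℂ) ^ d =
        if k = d then 1 else 0 := by
    simpa [apply_ite Complex.ofReal] using congrArg Complex.ofReal
      (Lagrange.sum_coeff_basis_mul_pow (Chebyshev.strictMonoOn_nodeIcc hAB).injOn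
        (by rw [card_range]; exact Nat.lt_succ_of_le hd) k)
  have hcoeff (k : Fin m →₀ ℕ) : ‖U.coeff k‖ ≤ (∏ j, a (k j)) * M := by
    simpa only [Complex.norm_real, Real.norm_eq_abs] using
      MvPolynomial.norm_coeff_le (range (n + 1)) _ _ hw hdeg
        (fun i _ => U.norm_eval_le_sSup_Icc fun j => Chebyshev.nodeIcc_mem_Icc hAB.le _) k
  have hsum : ∑ d ∈ range (n + 1), a d = (Chebyshev.T ℝ n).eval ((B + A + 2) / (B - A)) := by
    rw [sum_comm]; exact Chebyshev.sum_sum_abs_coeff_basis_nodeIcc hA.le hAB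
  calc ∑ k ∈ U.support, ‖U.coeff k‖ ≤ ∑ k ∈ U.support, (∏ j, a (k j)) * M :=
        sum_le_sum fun k _ => hcoeff k
    _ = (∑ k ∈ U.support, ∏ j, a (k j)) * M := (sum_mul _ _ _).symm
    _ ≤ (∑ d ∈ range (n + 1), a d) ^ m * M := by
        gcongr
        have h := Finsupp.sum_prod_le_sum_range_pow (S := U.support) (a := a)
          (fun k hk j => (MvPolynomial.monomial_le_degreeOf j hk).trans (hdeg j))
          fun d => sum_nonneg fun i _ => abs_nonneg _
        rwa [Fintype.card_fin] at h
    _ = _ := by rw [hsum]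
end
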